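/- arXiv:0801.0401 — 5 statements merged into one kernel-verified Lean document; each statement's English description precedes it below -/
import Mathlib

section
/- Let A be a left-noetherian ring satisfying Auslander's condition (AC), and let M be a finitely generated left A-module. If there exists an integer n such that Ext_A^i(M,M) = 0 for all i ≥ n, and if Ext_A^i(M,A) = 0 for all i ≥ 1, then M is a projective A-module. -/
open CategoryTheory

universe u

noncomputable abbrev ExtGroup {A : Type u} [Ring A] (M N : ModuleCat.{u} A) (i : ℕ) :=
  ((Ext ℤ (ModuleCat.{u} A) i).obj (Opposite.op M)).obj N

/-- Auslander's condition (AC). -/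
def SatisfiesAC (A : Type u) [Ring A] : Prop :=
  ∀ M : ModuleCat.{u} A, Module.Finite A M →
    ∃ b : ℕ, ∀ N : ModuleCat.{u} A, Module.Finite A N →
      (∃ n : ℕ, ∀ i ≥ n, Subsingleton (ExtGroup M N i)) →
      ∀ i > b, Subsingleton (ExtGroup M N i)

/-!
Splice a resolution of `M` by finite free modules `F j` from short exact sequences
`0 → K (j+1) → F j → K j → 0` with `K 0 = M`; the syzygies `K j` are finite since `A` is
noetherian, and all Ext groups are read off the Hom complex of this resolution.

`Ext^{≥1}(M, A) = 0` gives `Ext^{≥1}(M, P) = 0` for every finite projective `P`, so dimension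
shifting in the second variable turns `Ext^{≫0}(M, M) = 0` into `Ext^{≫0}(M, K k) = 0` for every
`k`. Auslander's condition then bounds these uniformly by some `b`, whence
`Ext^1(K b, K (b+1)) = Ext^(b+1)(M, K (b+1)) = 0`: the sequence at `b` splits and `K b` is
projective. Conversely, if `K (j+1)` is projective then `Ext^(j+1)(M, K (j+1)) = 0`, so the
sequence at `j` splits as well; descending from `b` shows that `M = K 0` is projective.
-/

open Limits

universe v w

structure SyzygySequence (C : Type w) [Category.{v} C] [Abelian C] where
  F : ℕ → C
  K : ℕ → C
  ι : ∀ j, K (j + 1) ⟶ F j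
  π : ∀ j, F j ⟶ K j
  ι_π : ∀ j, ι j ≫ π j = 0
  shortExact : ∀ j, (ShortComplex.mk (ι j) (π j) (ι_π j)).ShortExact
  projective : ∀ j, Projective (F j)

namespace SyzygySequence

section Abelian

variable {C : Type w} [Category.{v} C] [Abelian C] (S : SyzygySequence C)

instance (j : ℕ) : Mono (S.ι j) := (S.shortExact j).mono_f
instance (j : ℕ) : Epi (S.π j) := (S.shortExact j).epi_g
instance (j : ℕ) : Projective (S.F j) := S.projective j

def d (j : ℕ) : S.F (j + 1) ⟶ S.F j := S.π (j + 1) ≫ S.ι j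

lemma d_π (j : ℕ) : S.d j ≫ S.π j = 0 := by
  rw [d, Category.assoc, ι_π, comp_zero]

lemma ι_d (j : ℕ) : S.ι (j + 1) ≫ S.d j = 0 := by
  rw [d, ← Category.assoc, ι_π, zero_comp]

lemma d_d (j : ℕ) : S.d (j + 1) ≫ S.d j = 0 := by
  rw [d, Category.assoc, ι_d, comp_zero]

noncomputable def complex : ChainComplex C ℕ := ChainComplex.of S.F S.d S.d_d

lemma complex_d (j : ℕ) : S.complex.d (j + 1) j = S.d j := ChainComplex.of_d _ _ j

lemma complex_d_π : S.complex.d 1 0 ≫ S.π 0 = 0 := (S.complex_d 0).symm ▸ S.d_π 0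

lemma exact_d_π (j : ℕ) : (ShortComplex.mk (S.d j) (S.π j) (S.d_π j)).Exact := by
  let φ : ShortComplex.mk (S.d j) (S.π j) (S.d_π j) ⟶
      ShortComplex.mk (S.ι j) (S.π j) (S.ι_π j) :=
    { τ₁ := S.π (j + 1), τ₂ := 𝟙 _, τ₃ := 𝟙 _ }
  exact (ShortComplex.exact_iff_of_epi_of_isIso_of_mono φ).2 (S.shortExact j).exact

lemma exact_d_d (j : ℕ) : (ShortComplex.mk (S.d (j + 1)) (S.d j) (S.d_d j)).Exact := by
  let φ : ShortComplex.mk (S.d (j + 1)) (S.π (j + 1)) (S.d_π _) ⟶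
      ShortComplex.mk (S.d (j + 1)) (S.d j) (S.d_d j) :=
    { τ₁ := 𝟙 _, τ₂ := 𝟙 _, τ₃ := S.ι j }
  exact (ShortComplex.exact_iff_of_epi_of_isIso_of_mono φ).1 (S.exact_d_π (j + 1))

noncomputable def resolution : ProjectiveResolution (S.K 0) where
  complex := S.complex
  projective j := S.projective j
  π := (ChainComplex.toSingle₀Equiv _ _).symm ⟨S.π 0, S.complex_d_π⟩
  quasiIso := ⟨fun n => by
    cases n with
    | zero =>
      rw [ChainComplex.quasiIsoAt₀_iff, ShortComplex.quasiIso_iff_of_zeros' _ rfl rfl rfl]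
      refine (ShortComplex.exact_and_epi_g_iff_of_iso ?_).2
        ⟨S.exact_d_π 0, inferInstanceAs (Epi (S.π 0))⟩
      refine ShortComplex.isoMk (Iso.refl _) (Iso.refl _) (Iso.refl _) ?_ ?_
      · exact (Category.id_comp _).trans ((S.complex_d 0).symm.trans (Category.comp_id _).symm)
      · have h := ChainComplex.toSingle₀Equiv_symm_apply_f_zero _ S.complex_d_π
        exact (Category.id_comp _).trans (h.symm.trans (Category.comp_id _).symm)
    | succ n =>
      rw [quasiIsoAt_iff_exactAt' _ _ (ChainComplex.exactAt_succ_single_obj _ _),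
        HomologicalComplex.exactAt_iff' _ (n + 1 + 1) (n + 1) n (by simp) (by simp)]
      simp only [HomologicalComplex.sc', HomologicalComplex.shortComplexFunctor', complex,
        ChainComplex.of_d]
      exact S.exact_d_d n⟩

def HomExactAt (m : ℕ) (Y : C) : Prop :=
  ∀ f : S.F (m + 1) ⟶ Y, S.d (m + 1) ≫ f = 0 → ∃ g : S.F m ⟶ Y, S.d m ≫ g = f

lemma isZero_ext_succ_iff [EnoughProjectives C] (m : ℕ) (Y : C) :
    IsZero (((Ext ℤ C (m + 1)).obj (Opposite.op (S.K 0))).obj Y) ↔ S.HomExactAt m Y := by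
  rw [(S.resolution.isoExt (m + 1) Y).isZero_iff,
    ← HomologicalComplex.exactAt_iff_isZero_homology,
    HomologicalComplex.exactAt_iff' _ m (m + 1) (m + 1 + 1) (by simp) (by simp),
    ShortComplex.moduleCat_exact_iff]
  simp only [HomExactAt, ← complex_d]
  exact Iff.rfl

variable {S}

lemma HomExactAt.of_retract {m : ℕ} {Y Y' : C} (h : S.HomExactAt m Y) (e : Retract Y' Y) :
    S.HomExactAt m Y' := by
  intro f hf
  obtain ⟨g, hg⟩ := h (f ≫ e.i) (by rw [← Category.assoc, hf, zero_comp])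
  exact ⟨g ≫ e.r, by rw [← Category.assoc, hg, Category.assoc, e.retract, Category.comp_id]⟩

variable (S)

/-- Dimension shifting in the second variable along `0 → K (j+1) → F j → K j → 0`. -/
lemma homExactAt_succ_K {m j : ℕ} (hK : S.HomExactAt m (S.K j))
    (hF : S.HomExactAt (m + 1) (S.F j)) : S.HomExactAt (m + 1) (S.K (j + 1)) := by
  intro f hf
  obtain ⟨g, hg⟩ := hF (f ≫ S.ι j) (by rw [← Category.assoc, hf, zero_comp])
  obtain ⟨h, hh⟩ := hK (g ≫ S.π j) (by
    rw [← Category.assoc, hg, Category.assoc, ι_π, comp_zero])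
  have hg' : (g - S.d m ≫ Projective.factorThru h (S.π j)) ≫ S.π j = 0 := by
    rw [Preadditive.sub_comp, Category.assoc, Projective.factorThru_comp, hh, sub_self]
  refine ⟨(S.shortExact j).exact.lift _ hg', ?_⟩
  rw [← cancel_mono (S.ι j), Category.assoc, ShortComplex.Exact.lift_f, Preadditive.comp_sub,
    ← Category.assoc, d_d, zero_comp, sub_zero, hg]

lemma projective_K_of_homExactAt {j : ℕ} (h : S.HomExactAt j (S.K (j + 1))) :
    Projective (S.K j) := by
  -- `π (j+1)` is a cocycle, and a primitive of it is a retraction of `ι j`.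
  obtain ⟨r, hr⟩ := h (S.π (j + 1)) (S.d_π (j + 1))
  have hιr : S.ι j ≫ r = 𝟙 _ := by
    rw [← cancel_epi (S.π (j + 1)), ← Category.assoc, Category.comp_id]
    exact hr
  let σ := ShortComplex.Splitting.ofExactOfRetraction _ (S.shortExact j).exact r hιr
    (inferInstanceAs (Epi (S.π j)))
  exact Retract.projective ⟨σ.s, S.π j, σ.s_g⟩

lemma homExactAt_K_of_projective {j : ℕ} [Projective (S.K (j + 1))]
    (hF : S.HomExactAt j (S.F (j + 1))) : S.HomExactAt j (S.K (j + 1)) :=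
  hF.of_retract ⟨Projective.factorThru (𝟙 _) (S.π (j + 1)), S.π (j + 1),
    Projective.factorThru_comp _ _⟩

lemma homExactAt_K_of_le (hF : ∀ m j, S.HomExactAt (m + 1) (S.F j)) {n : ℕ}
    (hK : ∀ m ≥ n, S.HomExactAt m (S.K 0)) (k : ℕ) :
    ∀ m ≥ n + k, S.HomExactAt m (S.K k) := by
  induction k with
  | zero => exact hK
  | succ k ih =>
    rintro (_ | m) hm
    · omega
    · exact S.homExactAt_succ_K (ih m (by omega)) (hF m k)

lemma projective_K_zero (hF : ∀ j, S.HomExactAt j (S.F (j + 1))) (j : ℕ)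
    (hj : Projective (S.K j)) : Projective (S.K 0) := by
  induction j with
  | zero => exact hj
  | succ j ih => exact ih (S.projective_K_of_homExactAt (S.homExactAt_K_of_projective (hF j)))

end Abelian

section ModuleCat

variable {A : Type u} [Ring A] (S : SyzygySequence (ModuleCat.{u} A))

lemma subsingleton_extGroup_succ_iff (m : ℕ) (N : ModuleCat.{u} A) :
    Subsingleton (ExtGroup (S.K 0) N (m + 1)) ↔ S.HomExactAt m N :=
  ModuleCat.isZero_iff_subsingleton.symm.trans (S.isZero_ext_succ_iff m N)

variable {S}

lemma HomExactAt.pi {m : ℕ} (h : S.HomExactAt m (ModuleCat.of A A)) (I : Type) :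
    S.HomExactAt m (ModuleCat.of A (I → A)) := by
  intro f hf
  have hcomp (i : I) : ∃ g : S.F m ⟶ ModuleCat.of A A,
      S.d m ≫ g = f ≫ ModuleCat.ofHom (LinearMap.proj i) :=
    h _ (by rw [← Category.assoc, hf, zero_comp])
  choose g hg using hcomp
  refine ⟨ModuleCat.ofHom (LinearMap.pi fun i => (g i).hom), ?_⟩
  ext x i
  exact ConcreteCategory.congr_hom (hg i) x

lemma HomExactAt.of_projective {m : ℕ} (h : S.HomExactAt m (ModuleCat.of A A))
    (P : ModuleCat.{u} A) [Module.Finite A P] [Module.Projective A P] : S.HomExactAt m P := by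
  obtain ⟨n, p, hp⟩ := Module.Finite.exists_fin' A P
  obtain ⟨s, hs⟩ := Module.projective_lifting_property p LinearMap.id hp
  exact (h.pi (Fin n)).of_retract ⟨ModuleCat.ofHom s, ModuleCat.ofHom p,
    ModuleCat.hom_ext hs⟩

end ModuleCat

theorem exists_finite {A : Type u} [Ring A] [IsNoetherianRing A] (M : ModuleCat.{u} A)
    [Module.Finite A M] :
    ∃ S : SyzygySequence (ModuleCat.{u} A), S.K 0 = M ∧
      ∀ j, Module.Finite A (S.F j) ∧ Module.Finite A (S.K j) := by
  choose n p hp using fun N : {N : ModuleCat.{u} A // Module.Finite A N} =>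
    have := N.2
    Module.Finite.exists_fin' A N.1
  -- `inferInstance` finds the kernels finite because `A` is noetherian.
  let K (j : ℕ) : {N : ModuleCat.{u} A // Module.Finite A N} :=
    Nat.rec ⟨M, ‹_›⟩
      (fun _ N => ⟨ModuleCat.of A (LinearMap.ker (p N)), inferInstance⟩) j
  refine ⟨{ F j := ModuleCat.of A (Fin (n (K j)) → A)
            K j := (K j).1
            ι j := ModuleCat.ofHom (LinearMap.ker (p (K j))).subtype
            π j := ModuleCat.ofHom (p (K j))
            ι_π j := (LinearMap.shortComplexKer (p (K j))).zero
            shortExact j := LinearMap.shortExact_shortComplexKer (hp (K j))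
            projective j := ModuleCat.projective_of_free (Pi.basisFun A _) }, rfl,
    fun j => ⟨inferInstance, (K j).2⟩⟩

end SyzygySequence

theorem stmt0 (A : Type u) [Ring A] [IsNoetherianRing A]
    (hAC : SatisfiesAC A) (M : ModuleCat.{u} A) (_ : Module.Finite A M)
    (h1 : ∃ n : ℕ, ∀ i ≥ n, Subsingleton (ExtGroup M M i))
    (h2 : ∀ i ≥ 1, Subsingleton (ExtGroup M (ModuleCat.of A A) i)) :
    Module.Projective A M := by
  obtain ⟨S, rfl, hfin⟩ := SyzygySequence.exists_finite M
  obtain ⟨n, hn⟩ := h1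
  have hF (m j : ℕ) : S.HomExactAt m (S.F j) :=
    have := (hfin j).1
    ((S.subsingleton_extGroup_succ_iff m _).1 (h2 (m + 1) (by omega))).of_projective _
  have hK₀ (m : ℕ) (hm : m ≥ n) : S.HomExactAt m (S.K 0) :=
    (S.subsingleton_extGroup_succ_iff m _).1 (hn (m + 1) (by omega))
  have hK (k : ℕ) : ∃ n, ∀ i ≥ n, Subsingleton (ExtGroup (S.K 0) (S.K k) i) := by
    refine ⟨n + k + 1, fun i hi => ?_⟩
    obtain ⟨m, rfl⟩ : ∃ m, i = m + 1 := ⟨i - 1, by omega⟩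
    exact (S.subsingleton_extGroup_succ_iff m _).2
      (S.homExactAt_K_of_le (fun _ => hF _) hK₀ k m (by omega))
  obtain ⟨b, hb⟩ := hAC (S.K 0) (hfin 0).2
  have hKb : Projective (S.K b) := S.projective_K_of_homExactAt
    ((S.subsingleton_extGroup_succ_iff b _).1
      (hb _ (hfin (b + 1)).2 (hK (b + 1)) (b + 1) (by omega)))
  have := S.projective_K_zero (fun j => hF j (j + 1)) b hKb
  infer_instance
end

section
/- Let A be a left-noetherian ring satisfying Auslander's condition (AC). Let U be a ℤ-indexed chain complex of left A-modules that is exact (acyclic), and let C be a finitely generated left A-module. Assume: (a) there exists an integer t such that the module U_v is finitely generated for all v ≥ t; (b) Ext_A^i(C, U_v) = 0 for all i ≥ 1 and all v ∈ ℤ; (c) there exists an integer w and an integer n such that Ext_A^i(C, Z_w(U)) = 0 for all i ≥ n, where Z_v(U) denotes the kernel of the differential ∂_v : U_v → U_{v-1}. Then Ext_A^i(C, Z_v(U)) = 0 for all i ≥ 1 and all v ∈ ℤ; in particular, the complex Hom_A(C, U) is exact. -/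
/-!
Write `Z_v` for the cycles. In each short exact sequence `0 → Z_v → U_v → Z_{v-1} → 0` the
middle term has no higher `Ext` from `C`, so dimension shifting gives
`Ext^i(C, Z_{v-1}) = 0 ↔ Ext^{i+1}(C, Z_v) = 0` for `i ≥ 1`. Hence the eventual vanishing of
`Ext(C, Z_w)` spreads to every `Z_v`. For `v ≥ t` the cycles are finitely generated, so (AC)
gives one bound `b`, independent of `v`, above which `Ext(C, Z_v)` vanishes; shifting
`Ext^i(C, Z_v)` to `Ext^{i+k}(C, Z_{v+k})` with `k` large then kills it for every `i ≥ 1`.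
Finally `Ext^1(C, Z_{v+1}) = 0` makes `Hom(C, U_{v+1}) → Hom(C, Z_v)` surjective, which is the
exactness of `Hom(C, U)` at `v`.
-/

open CategoryTheory

universe u

/-- The module of `v`-cycles `Z_v(U) = ker (∂_v : U_v → U_{v-1})` of a ℤ-indexed
chain complex of `A`-modules. -/
noncomputable abbrev cycles' {A : Type u} [Ring A] (U : ChainComplex (ModuleCat.{u} A) ℤ)
    (v : ℤ) : ModuleCat.{u} A :=
  ModuleCat.of A (LinearMap.ker (U.d v (v - 1)).hom)

open Limits

namespace CategoryTheory

namespace ProjectiveResolution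

variable {𝒞 : Type*} [Category 𝒞] [Abelian 𝒞] {X : 𝒞}

/-- Exactness of `Hom(P, Y)` in cohomological degree `m + 1`, i.e. `Ext^{m+1}(X, Y) = 0`. -/
def HomExactAtSucc (P : ProjectiveResolution X) (Y : 𝒞) (m : ℕ) : Prop :=
  ∀ φ : P.complex.X (m + 1) ⟶ Y, P.complex.d (m + 2) (m + 1) ≫ φ = 0 →
    ∃ ψ : P.complex.X m ⟶ Y, P.complex.d (m + 1) m ≫ ψ = φ

variable {P : ProjectiveResolution X} {S : ShortComplex 𝒞}

lemma homExactAtSucc_X₃_of_shortExact {m : ℕ} (hS : S.ShortExact)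
    (h₂ : P.HomExactAtSucc S.X₂ m) (h₁ : P.HomExactAtSucc S.X₁ (m + 1)) :
    P.HomExactAtSucc S.X₃ m := by
  have := hS.mono_f
  have := hS.epi_g
  intro φ hφ
  obtain ⟨ψ, hψ⟩ : ∃ ψ, ψ ≫ S.g = φ := ⟨_, Projective.factorThru_comp φ S.g⟩
  have hdψ : (P.complex.d (m + 2) (m + 1) ≫ ψ) ≫ S.g = 0 := by rw [Category.assoc, hψ, hφ]
  obtain ⟨α, hα⟩ : ∃ α, α ≫ S.f = P.complex.d (m + 2) (m + 1) ≫ ψ :=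
    ⟨_, hS.exact.lift_f _ hdψ⟩
  obtain ⟨β, hβ⟩ := h₁ α (by
    rw [← cancel_mono S.f, Category.assoc, hα, ← Category.assoc,
      HomologicalComplex.d_comp_d, zero_comp, zero_comp])
  obtain ⟨γ, hγ⟩ := h₂ (ψ - β ≫ S.f) (by
    rw [Preadditive.comp_sub, ← Category.assoc, hβ, hα, sub_self])
  refine ⟨γ ≫ S.g, ?_⟩
  rw [← Category.assoc, hγ, Preadditive.sub_comp, hψ, Category.assoc, S.zero, comp_zero,
    sub_zero]

lemma homExactAtSucc_X₁_of_shortExact {m : ℕ} (hS : S.ShortExact)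
    (h₂ : P.HomExactAtSucc S.X₂ (m + 1)) (h₃ : P.HomExactAtSucc S.X₃ m) :
    P.HomExactAtSucc S.X₁ (m + 1) := by
  have := hS.mono_f
  have := hS.epi_g
  intro α hα
  obtain ⟨ψ, hψ⟩ := h₂ (α ≫ S.f) (by rw [← Category.assoc, hα, zero_comp])
  obtain ⟨θ, hθ⟩ := h₃ (ψ ≫ S.g) (by
    rw [← Category.assoc, hψ, Category.assoc, S.zero, comp_zero])
  obtain ⟨θ', hθ'⟩ : ∃ θ', θ' ≫ S.g = θ := ⟨_, Projective.factorThru_comp θ S.g⟩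
  have hk : (ψ - P.complex.d (m + 1) m ≫ θ') ≫ S.g = 0 := by
    rw [Preadditive.sub_comp, Category.assoc, hθ', hθ, sub_self]
  refine ⟨hS.exact.lift _ hk, ?_⟩
  rw [← cancel_mono S.f, Category.assoc, hS.exact.lift_f, Preadditive.comp_sub, hψ,
    ← Category.assoc, HomologicalComplex.d_comp_d, zero_comp, sub_zero]

lemma exists_comp_g_eq_of_homExactAtSucc_zero (hS : S.ShortExact)
    (h₁ : P.HomExactAtSucc S.X₁ 0) (f : X ⟶ S.X₃) :
    ∃ g : X ⟶ S.X₂, g ≫ S.g = f := by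
  have := hS.mono_f
  have := hS.epi_g
  obtain ⟨ψ, hψ⟩ : ∃ ψ, ψ ≫ S.g = P.π.f 0 ≫ f :=
    ⟨_, Projective.factorThru_comp _ S.g⟩
  have hdψ : (P.complex.d 1 0 ≫ ψ) ≫ S.g = 0 := by
    rw [Category.assoc, hψ]
    exact (P.complex_d_comp_π_f_zero_assoc f).trans zero_comp
  obtain ⟨α, hα⟩ : ∃ α, α ≫ S.f = P.complex.d 1 0 ≫ ψ :=
    ⟨_, hS.exact.lift_f _ hdψ⟩
  obtain ⟨β, hβ⟩ := h₁ α (by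
    rw [← cancel_mono S.f, Category.assoc, hα, ← Category.assoc,
      HomologicalComplex.d_comp_d, zero_comp, zero_comp])
  have hcob : P.complex.d 1 0 ≫ (ψ - β ≫ S.f) = 0 := by
    rw [Preadditive.comp_sub, ← Category.assoc, hβ, hα, sub_self]
  refine ⟨P.exact₀.desc _ hcob, (cancel_epi (P.π.f 0)).mp ?_⟩
  exact (Category.assoc _ _ _).symm.trans (by
    rw [P.exact₀.g_desc, Preadditive.sub_comp, hψ, Category.assoc, S.zero, comp_zero, sub_zero])

end ProjectiveResolution

end CategoryTheory

section ModuleCat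

variable {A : Type u} [Ring A] {C : ModuleCat.{u} A}

lemma subsingleton_extGroup_succ_iff (P : ProjectiveResolution C) (Y : ModuleCat.{u} A)
    (m : ℕ) : Subsingleton (ExtGroup C Y (m + 1)) ↔ P.HomExactAtSucc Y m := by
  rw [← ModuleCat.isZero_iff_subsingleton, Iso.isZero_iff (P.isoExt (m + 1) Y),
    ← HomologicalComplex.exactAt_iff_isZero_homology,
    HomologicalComplex.exactAt_iff' _ m (m + 1) (m + 2) (by simp) (by simp),
    ShortComplex.moduleCat_exact_iff]
  rfl

variable {S : ShortComplex (ModuleCat.{u} A)}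

lemma subsingleton_extGroup_X₁_succ_succ_iff (hS : S.ShortExact)
    (hX₂ : ∀ i, 1 ≤ i → Subsingleton (ExtGroup C S.X₂ i)) (m : ℕ) :
    Subsingleton (ExtGroup C S.X₁ (m + 2)) ↔ Subsingleton (ExtGroup C S.X₃ (m + 1)) := by
  let P := ProjectiveResolution.of C
  have hP₂ (k : ℕ) : P.HomExactAtSucc S.X₂ k :=
    (subsingleton_extGroup_succ_iff P _ k).mp (hX₂ (k + 1) (by omega))
  rw [subsingleton_extGroup_succ_iff P _ (m + 1), subsingleton_extGroup_succ_iff P]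
  exact ⟨ProjectiveResolution.homExactAtSucc_X₃_of_shortExact hS (hP₂ m),
    ProjectiveResolution.homExactAtSucc_X₁_of_shortExact hS (hP₂ (m + 1))⟩

lemma exists_comp_g_eq_of_subsingleton_extGroup_one (hS : S.ShortExact)
    (h₁ : Subsingleton (ExtGroup C S.X₁ 1)) (f : C ⟶ S.X₃) :
    ∃ g : C ⟶ S.X₂, g ≫ S.g = f :=
  ProjectiveResolution.exists_comp_g_eq_of_homExactAtSucc_zero hS
    ((subsingleton_extGroup_succ_iff (ProjectiveResolution.of C) _ 0).mp h₁) f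

end ModuleCat

namespace HomologicalComplex

variable {A : Type u} [Ring A] (U : ChainComplex (ModuleCat.{u} A) ℤ)

noncomputable def cyclesShortComplex (i j : ℤ) (hij : j = i - 1) :
    ShortComplex (ModuleCat.{u} A) where
  X₁ := cycles' U i
  X₂ := U.X i
  X₃ := cycles' U j
  f := ModuleCat.ofHom (LinearMap.ker (U.d i (i - 1)).hom).subtype
  g := ModuleCat.ofHom <| (U.d i j).hom.codRestrict _ fun x ↦ by
    rw [LinearMap.mem_ker, ← ModuleCat.comp_apply, U.d_comp_d]
    rfl
  zero := by
    subst hij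
    ext x
    exact x.2

lemma cyclesShortComplex_shortExact {i j : ℤ} (hij : j = i - 1) (hU : U.ExactAt j) :
    (U.cyclesShortComplex i j hij).ShortExact := by
  subst hij
  rw [HomologicalComplex.exactAt_iff' _ i (i - 1) (i - 1 - 1) (by simp) (by simp),
    ShortComplex.moduleCat_exact_iff] at hU
  refine
    { exact := (ShortComplex.moduleCat_exact_iff _).mpr fun x hx ↦
        ⟨⟨x, congrArg Subtype.val hx⟩, rfl⟩
      mono_f := (ModuleCat.mono_iff_injective _).mpr (Submodule.injective_subtype _)
      epi_g := (ModuleCat.epi_iff_surjective _).mpr fun z ↦ ?_ }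
  obtain ⟨x, hx⟩ := hU z.1 z.2
  exact ⟨x, Subtype.ext hx⟩

end HomologicalComplex

section Cycles

variable {A : Type u} [Ring A] {U : ChainComplex (ModuleCat.{u} A) ℤ} {C : ModuleCat.{u} A}

lemma subsingleton_extGroup_cycles_iff_add (hU : ∀ v, U.ExactAt v)
    (hb : ∀ i, 1 ≤ i → ∀ v, Subsingleton (ExtGroup C (U.X v) i)) (v : ℤ) (k : ℕ)
    {i : ℕ} (hi : 1 ≤ i) :
    Subsingleton (ExtGroup C (cycles' U v) i) ↔
      Subsingleton (ExtGroup C (cycles' U (v + k)) (i + k)) := by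
  obtain ⟨m, rfl⟩ : ∃ m, i = m + 1 := ⟨i - 1, by omega⟩
  induction k with
  | zero => simp
  | succ k ih =>
    have hS := U.cyclesShortComplex_shortExact (i := v + (k + 1 : ℕ)) (j := v + k) (by omega)
      (hU _)
    refine ih.trans ?_
    rw [show m + 1 + k = m + k + 1 by omega, show m + 1 + (k + 1) = m + k + 2 by omega]
    exact (subsingleton_extGroup_X₁_succ_succ_iff hS (hb · · _) (m + k)).symm

lemma exists_subsingleton_extGroup_cycles_iff_add (hU : ∀ v, U.ExactAt v)
    (hb : ∀ i, 1 ≤ i → ∀ v, Subsingleton (ExtGroup C (U.X v) i)) (v : ℤ) (k : ℕ) :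
    (∃ n, ∀ i ≥ n, Subsingleton (ExtGroup C (cycles' U v) i)) ↔
      ∃ n, ∀ i ≥ n, Subsingleton (ExtGroup C (cycles' U (v + k)) i) := by
  constructor
  · rintro ⟨n, hn⟩
    refine ⟨n + k + 1, fun i hi ↦ ?_⟩
    obtain ⟨i, rfl⟩ : ∃ i', i = i' + k := ⟨i - k, by omega⟩
    exact (subsingleton_extGroup_cycles_iff_add hU hb v k (by omega)).mp (hn i (by omega))
  · rintro ⟨n, hn⟩
    exact ⟨n + 1, fun i hi ↦
      (subsingleton_extGroup_cycles_iff_add hU hb v k (by omega)).mpr (hn (i + k) (by omega))⟩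

lemma exists_subsingleton_extGroup_cycles (hU : ∀ v, U.ExactAt v)
    (hb : ∀ i, 1 ≤ i → ∀ v, Subsingleton (ExtGroup C (U.X v) i)) {w : ℤ}
    (hw : ∃ n, ∀ i ≥ n, Subsingleton (ExtGroup C (cycles' U w) i)) (v : ℤ) :
    ∃ n, ∀ i ≥ n, Subsingleton (ExtGroup C (cycles' U v) i) := by
  rcases le_total w v with hwv | hvw
  · obtain ⟨k, rfl⟩ : ∃ k : ℕ, v = w + k := ⟨(v - w).toNat, by omega⟩
    exact (exists_subsingleton_extGroup_cycles_iff_add hU hb w k).mp hw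
  · obtain ⟨k, rfl⟩ : ∃ k : ℕ, w = v + k := ⟨(w - v).toNat, by omega⟩
    exact (exists_subsingleton_extGroup_cycles_iff_add hU hb v k).mpr hw

lemma function_exact_comp_d_of_subsingleton_extGroup_one {v : ℤ} (hU : U.ExactAt v)
    (h : Subsingleton (ExtGroup C (cycles' U (v + 1)) 1)) :
    Function.Exact (fun f : C ⟶ U.X (v + 1) ↦ f ≫ U.d (v + 1) v)
      (fun f : C ⟶ U.X v ↦ f ≫ U.d v (v - 1)) := by
  intro y
  constructor
  · intro hy
    have hS := U.cyclesShortComplex_shortExact (i := v + 1) (j := v) (by omega) hU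
    have hy' (x : C) : y x ∈ LinearMap.ker (U.d v (v - 1)).hom :=
      congrArg (fun g : C ⟶ U.X (v - 1) ↦ g x) hy
    obtain ⟨g, hg⟩ := exists_comp_g_eq_of_subsingleton_extGroup_one hS h
      (ModuleCat.ofHom (y.hom.codRestrict _ hy'))
    exact ⟨g, ModuleCat.hom_ext (LinearMap.ext fun x ↦ congrArg (fun g ↦ (g.hom x).1) hg)⟩
  · rintro ⟨g, rfl⟩
    simp

end Cycles

theorem stmt1 (A : Type u) [Ring A] [IsNoetherianRing A] (hAC : SatisfiesAC A)
    (U : ChainComplex (ModuleCat.{u} A) ℤ) (hU : ∀ v : ℤ, U.ExactAt v)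
    (C : ModuleCat.{u} A) (hC : Module.Finite A C)
    (ha : ∃ t : ℤ, ∀ v ≥ t, Module.Finite A (U.X v))
    (hb : ∀ (i : ℕ), 1 ≤ i → ∀ v : ℤ, Subsingleton (ExtGroup C (U.X v) i))
    (hc : ∃ w : ℤ, ∃ n : ℕ, ∀ i ≥ n, Subsingleton (ExtGroup C (cycles' U w) i)) :
    (∀ (i : ℕ), 1 ≤ i → ∀ v : ℤ, Subsingleton (ExtGroup C (cycles' U v) i)) ∧
    (∀ v : ℤ, Function.Exact
      (fun f : C ⟶ U.X (v + 1) => f ≫ U.d (v + 1) v)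
      (fun f : C ⟶ U.X v => f ≫ U.d v (v - 1))) := by
  obtain ⟨t, ht⟩ := ha
  obtain ⟨w, hw⟩ := hc
  obtain ⟨b, hbound⟩ := hAC C hC
  -- Above `t` the cycles are submodules of noetherian modules, so AC bounds their `Ext` by `b`.
  have hlarge (v : ℤ) (hv : t ≤ v) (i : ℕ) (hi : b < i) :
      Subsingleton (ExtGroup C (cycles' U v) i) :=
    have := ht v hv
    hbound _ inferInstance (exists_subsingleton_extGroup_cycles hU hb hw v) i hi
  have hcycles (i : ℕ) (hi : 1 ≤ i) (v : ℤ) : Subsingleton (ExtGroup C (cycles' U v) i) := by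
    let k := (t - v).toNat + b
    exact (subsingleton_extGroup_cycles_iff_add hU hb v k hi).mpr
      (hlarge _ (by omega) _ (by omega))
  exact ⟨hcycles, fun v ↦
    function_exact_comp_d_of_subsingleton_extGroup_one (hU v) (hcycles 1 le_rfl (v + 1))⟩
end

section
/- Let A be a left-noetherian ring whose injective dimension as a left module over itself is finite, say equal to n. Then A satisfies Auslander's condition (AC) if and only if A satisfies the uniform Auslander condition (UAC); moreover, if A satisfies (AC), then the uniform bound n works: for all finitely generated left A-modules M and N, if Ext_A^i(M,N) = 0 for all sufficiently large i, then Ext_A^i(M,N) = 0 for all i > n. -/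
/-!
Dimension shifting. Since `Ext^i(M, A) = 0` for `i > n`, the same holds with `A` replaced by any
finite free module `F`. For finitely generated `N` with `Ext^•(M, N)` eventually zero, choose
`0 → K → F → N → 0` with `F` finite free; `K` is finitely generated since `A` is noetherian, its
`Ext` is again eventually zero, and `Ext^i(M, N) ≅ Ext^(i+1)(M, K)` for `i > n`. Iterating,
`Ext^i(M, N)` is isomorphic to an `Ext` group of degree beyond the (AC) bound of `M`, hence zero.

The long exact `Ext` sequences in the second variable come from the short exact sequence of Hom
complexes out of a projective resolution of `M`, which is exact since its terms are projective.
-/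

open CategoryTheory

universe u

/-- The uniform Auslander condition (UAC). -/
def SatisfiesUAC (A : Type u) [Ring A] : Prop :=
  ∃ b : ℕ, ∀ M N : ModuleCat.{u} A, Module.Finite A M → Module.Finite A N →
    (∃ n : ℕ, ∀ i ≥ n, Subsingleton (ExtGroup M N i)) →
    ∀ i > b, Subsingleton (ExtGroup M N i)

/-- `N` has injective dimension at most `n`, characterized by vanishing of
`Ext^i(-, N)` for all `i > n`. -/
def InjDimLE {A : Type u} [Ring A] (N : ModuleCat.{u} A) (n : ℕ) : Prop :=
  ∀ M : ModuleCat.{u} A, ∀ i > n, Subsingleton (ExtGroup M N i)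

open Limits Opposite

namespace ChainComplex

variable {C : Type*} [Category* C] [Abelian C] {R : Type*} [Ring R] [Linear R C]
  {α : Type*} [AddRightCancelSemigroup α] [One α] (K : ChainComplex C α)

def linearYonedaObjMap {Y Z : C} (f : Y ⟶ Z) :
    K.linearYonedaObj R Y ⟶ K.linearYonedaObj R Z where
  f i := ((linearYoneda R C).map f).app (op (K.X i))
  comm' i j _ := by
    ext (g : K.X i ⟶ Y)
    exact (Category.assoc _ _ _).symm

def linearYonedaObjShortComplex (S : ShortComplex C) :
    ShortComplex (CochainComplex (ModuleCat R) α) :=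
  ShortComplex.mk (K.linearYonedaObjMap S.f) (K.linearYonedaObjMap S.g) (by
    ext i (g : K.X i ⟶ S.X₁)
    exact (Category.assoc _ _ _).trans (by rw [S.zero, comp_zero]; rfl))

variable {K} in
lemma linearYonedaObjShortComplex_shortExact [∀ i, Projective (K.X i)] {S : ShortComplex C}
    (hS : S.ShortExact) : (K.linearYonedaObjShortComplex (R := R) S).ShortExact := by
  have := hS.mono_f
  refine HomologicalComplex.shortExact_of_degreewise_shortExact _ fun i ↦
    ModuleCat.shortComplex_shortExact _ ?_ ?_ ?_
  · intro (g : K.X i ⟶ S.X₂)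
    exact ⟨fun hg ↦ ⟨hS.exact.lift g hg, hS.exact.lift_f g hg⟩,
      fun ⟨f, hf⟩ ↦ hf ▸ ShortComplex.moduleCat_zero_apply _ f⟩
  · intro (a : K.X i ⟶ S.X₁) (b : K.X i ⟶ S.X₁) (hab : a ≫ S.f = b ≫ S.f)
    exact (cancel_mono S.f).mp hab
  · have := hS.epi_g
    intro (g : K.X i ⟶ S.X₃)
    exact ⟨Projective.factorThru g S.g, Projective.factorThru_comp g S.g⟩

end ChainComplex

lemma isZero_ext_of_isZero {R : Type*} [Ring R] {C : Type*} [Category* C] [Abelian C]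
    [Linear R C] [EnoughProjectives C] (M : C) {Z : C} (hZ : IsZero Z) (i : ℕ) :
    IsZero (((Ext R C i).obj (op M)).obj Z) := by
  let P := projectiveResolution M
  exact (P.isoExt i Z).isZero_iff.mpr (ShortComplex.isZero_homology_of_isZero_X₂ _
    (@ModuleCat.isZero_of_subsingleton _ _ _ ⟨fun f g ↦ hZ.eq_of_tgt f g⟩))

namespace CategoryTheory.ShortComplex.ShortExact

variable {R : Type*} [Ring R] {C : Type*} [Category* C] [Abelian C] [Linear R C]
  [EnoughProjectives C] {S : ShortComplex C} {M : C} {i : ℕ}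

lemma isZero_ext_X₂ (hS : S.ShortExact)
    (h₁ : IsZero (((Ext R C i).obj (Opposite.op M)).obj S.X₁))
    (h₃ : IsZero (((Ext R C i).obj (Opposite.op M)).obj S.X₃)) :
    IsZero (((Ext R C i).obj (Opposite.op M)).obj S.X₂) := by
  let P := projectiveResolution M
  rw [(P.isoExt i _).isZero_iff] at h₁ h₃ ⊢
  exact ((P.complex.linearYonedaObjShortComplex_shortExact hS).homology_exact₂ i).isZero_X₂
    (h₁.eq_of_src _ _) (h₃.eq_of_tgt _ _)

lemma isZero_ext_X₃ (hS : S.ShortExact)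
    (h₂ : IsZero (((Ext R C i).obj (Opposite.op M)).obj S.X₂))
    (h₁ : IsZero (((Ext R C (i + 1)).obj (Opposite.op M)).obj S.X₁)) :
    IsZero (((Ext R C i).obj (Opposite.op M)).obj S.X₃) := by
  let P := projectiveResolution M
  rw [(P.isoExt _ _).isZero_iff] at h₂ h₁ ⊢
  exact ((P.complex.linearYonedaObjShortComplex_shortExact hS).homology_exact₃ i (i + 1)
    rfl).isZero_X₂ (h₂.eq_of_src _ _) (h₁.eq_of_tgt _ _)

lemma isZero_ext_succ_X₁ (hS : S.ShortExact)
    (h₃ : IsZero (((Ext R C i).obj (Opposite.op M)).obj S.X₃))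
    (h₂ : IsZero (((Ext R C (i + 1)).obj (Opposite.op M)).obj S.X₂)) :
    IsZero (((Ext R C (i + 1)).obj (Opposite.op M)).obj S.X₁) := by
  let P := projectiveResolution M
  rw [(P.isoExt _ _).isZero_iff] at h₃ h₂ ⊢
  exact ((P.complex.linearYonedaObjShortComplex_shortExact hS).homology_exact₁ i (i + 1)
    rfl).isZero_X₂ (h₃.eq_of_src _ _) (h₂.eq_of_tgt _ _)

end CategoryTheory.ShortComplex.ShortExact

section ModuleCat

variable {A : Type u} [Ring A]

lemma isZero_ext_finPi {M : ModuleCat.{u} A} {n : ℕ}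
    (hA : ∀ i > n, IsZero (ExtGroup M (ModuleCat.of A A) i)) (k : ℕ) :
    ∀ i > n, IsZero (ExtGroup M (ModuleCat.of A (Fin k → A)) i) := by
  induction k with
  | zero => exact fun i _ ↦ isZero_ext_of_isZero M (ModuleCat.isZero_of_subsingleton _) i
  | succ k ih =>
    have hS := ModuleCat.shortComplexOfConj_shortExact (.refl A (Fin k → A))
      (Fin.consLinearEquiv A fun _ ↦ A).symm (.refl A A) _ _
      Function.Exact.inr_fst LinearMap.inr_injective LinearMap.fst_surjective
    exact fun i hi ↦ hS.isZero_ext_X₂ (ih i hi) (hA i hi)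

lemma exists_shortExact_finPi [IsNoetherianRing A] (N : ModuleCat.{u} A) [Module.Finite A N] :
    ∃ (K : ModuleCat.{u} A) (k : ℕ) (f : K ⟶ ModuleCat.of A (Fin k → A))
      (g : ModuleCat.of A (Fin k → A) ⟶ N) (w : f ≫ g = 0),
      Module.Finite A K ∧ (ShortComplex.mk f g w).ShortExact := by
  obtain ⟨k, π, hπ⟩ := Module.Finite.exists_fin' A N
  exact ⟨.of A (LinearMap.ker π), k, ModuleCat.ofHom (LinearMap.ker π).subtype,
    ModuleCat.ofHom π, ModuleCat.hom_ext π.exact_subtype_ker_map.linearMap_comp_eq_zero,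
    Module.Finite.of_fg (IsNoetherian.noetherian _),
    ModuleCat.shortComplex_shortExact _ π.exact_subtype_ker_map Subtype.val_injective hπ⟩

theorem isZero_ext_of_eventually_isZero [IsNoetherianRing A] {M : ModuleCat.{u} A} {n b : ℕ}
    (hA : ∀ i > n, IsZero (ExtGroup M (ModuleCat.of A A) i))
    (hb : ∀ N : ModuleCat.{u} A, Module.Finite A N →
      (∃ m, ∀ i ≥ m, IsZero (ExtGroup M N i)) → ∀ i > b, IsZero (ExtGroup M N i))
    (N : ModuleCat.{u} A) [Module.Finite A N] (hev : ∃ m, ∀ i ≥ m, IsZero (ExtGroup M N i)) :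
    ∀ i > n, IsZero (ExtGroup M N i) := by
  suffices h : ∀ j, ∀ N : ModuleCat.{u} A, Module.Finite A N →
      (∃ m, ∀ i ≥ m, IsZero (ExtGroup M N i)) → ∀ i > n, b < i + j → IsZero (ExtGroup M N i) from
    fun i hi ↦ h (b + 1) N inferInstance hev i hi (by omega)
  -- `j` bounds the number of dimension shifts needed to push the degree past `b`.
  intro j
  induction j with
  | zero => exact fun N hN hev i _ hbi ↦ hb N hN hev i hbi
  | succ j ih =>
    intro N hN hev i hi hbi
    obtain ⟨K, k, f, g, w, hK, hS⟩ := exists_shortExact_finPi N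
    have hF := isZero_ext_finPi hA k
    have hKev : ∃ m, ∀ i ≥ m, IsZero (ExtGroup M K i) := by
      obtain ⟨m, hm⟩ := hev
      refine ⟨m + n + 1, fun i hi ↦ ?_⟩
      obtain ⟨i, rfl⟩ := Nat.exists_eq_add_one.mpr (by omega : 0 < i)
      exact hS.isZero_ext_succ_X₁ (hm i (by omega)) (hF (i + 1) (by omega))
    exact hS.isZero_ext_X₃ (hF i hi) (ih K hK hKev (i + 1) (by omega) (by omega))

end ModuleCat

lemma SatisfiesUAC.satisfiesAC {A : Type u} [Ring A] (h : SatisfiesUAC A) : SatisfiesAC A :=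
  let ⟨b, hb⟩ := h
  fun M hM ↦ ⟨b, fun N hN ↦ hb M N hM hN⟩

theorem SatisfiesAC.subsingleton_ext_of_injDimLE {A : Type u} [Ring A] [IsNoetherianRing A]
    (hAC : SatisfiesAC A) {n : ℕ} (hid : InjDimLE (ModuleCat.of A A) n)
    (M N : ModuleCat.{u} A) (hM : Module.Finite A M) (hN : Module.Finite A N)
    (hev : ∃ m, ∀ i ≥ m, Subsingleton (ExtGroup M N i)) :
    ∀ i > n, Subsingleton (ExtGroup M N i) := by
  obtain ⟨b, hb⟩ := hAC M hM
  simp only [InjDimLE, ← ModuleCat.isZero_iff_subsingleton] at hb hid hev ⊢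
  exact isZero_ext_of_eventually_isZero (hid M) hb N hev

theorem stmt4_general (A : Type u) [Ring A] [IsNoetherianRing A] (n : ℕ)
    (hid : InjDimLE (ModuleCat.of A A) n) :
    (SatisfiesAC A ↔ SatisfiesUAC A) ∧
    (SatisfiesAC A →
      ∀ M N : ModuleCat.{u} A, Module.Finite A M → Module.Finite A N →
        (∃ m : ℕ, ∀ i ≥ m, Subsingleton (ExtGroup M N i)) →
        ∀ i > n, Subsingleton (ExtGroup M N i)) :=
  ⟨⟨fun hAC ↦ ⟨n, hAC.subsingleton_ext_of_injDimLE hid⟩, SatisfiesUAC.satisfiesAC⟩,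
    fun hAC ↦ hAC.subsingleton_ext_of_injDimLE hid⟩

/-- For a left-noetherian ring `A` whose injective dimension as a left module over
itself is (finite and) equal to `n`, the conditions (AC) and (UAC) are equivalent;
moreover, if `A` satisfies (AC), then `n` is a uniform Auslander bound. -/
theorem stmt4 (A : Type u) [Ring A] [IsNoetherianRing A] (n : ℕ)
    (hid : InjDimLE (ModuleCat.of A A) n)
    (hid' : ∀ m : ℕ, InjDimLE (ModuleCat.of A A) m → n ≤ m) :
    (SatisfiesAC A ↔ SatisfiesUAC A) ∧
    (SatisfiesAC A →
      ∀ M N : ModuleCat.{u} A, Module.Finite A M → Module.Finite A N →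
        (∃ m : ℕ, ∀ i ≥ m, Subsingleton (ExtGroup M N i)) →
        ∀ i > n, Subsingleton (ExtGroup M N i)) :=
  stmt4_general A n hid
end

section
/- Let A and B be left-noetherian rings that are Morita equivalent (i.e., their categories of left modules are equivalent). If A satisfies Auslander's condition (AC), then B satisfies (AC). -/
open CategoryTheory

universe u

/-!
An equivalence of module categories is additive and exact and preserves projectives, so it maps
a projective resolution of `M` to one of its image; being fully faithful, it identifies the Hom
complexes computing `Ext`, so `Ext` groups correspond. It also identifies submodule lattices, so,
`B` being noetherian, a finitely generated `B`-module corresponds to a noetherian, hence finitely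
generated, `A`-module. The bound that (AC) gives for the corresponding `A`-module then works over `B`.
-/

universe v u₁ u₂

namespace CategoryTheory

open Opposite

section Ext

variable {C : Type u₁} {D : Type u₂} [Category.{v} C] [Category.{v} D] [Abelian C] [Abelian D]
  {F : C ⥤ D} [F.Additive] [F.PreservesProjectiveObjects] [F.PreservesHomology]

noncomputable def Functor.FullyFaithful.linearYonedaObjMapProjectiveResolutionIso
    (hF : F.FullyFaithful) {X : C} (P : ProjectiveResolution X) (Y : C) :
    (F.mapProjectiveResolution P).complex.linearYonedaObj ℤ (F.obj Y) ≅
      P.complex.linearYonedaObj ℤ Y :=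
  HomologicalComplex.Hom.isoOfComponents
    (fun i => (AddEquiv.toIntLinearEquiv
      { toEquiv := hF.homEquiv.symm, map_add' := fun f g => hF.map_injective (by simp) }).toModuleIso)
    (fun i j _ => ModuleCat.hom_ext <| LinearMap.ext
      fun (g : F.obj (P.complex.X i) ⟶ F.obj Y) => by
      change P.complex.d j i ≫ hF.preimage g = hF.preimage (F.map (P.complex.d j i) ≫ g)
      rw [hF.preimage_comp, hF.preimage_map])

variable [EnoughProjectives C] [EnoughProjectives D]

noncomputable def Functor.FullyFaithful.extIso (hF : F.FullyFaithful) (n : ℕ) (X Y : C) :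
    ((Ext ℤ D n).obj (op (F.obj X))).obj (F.obj Y) ≅ ((Ext ℤ C n).obj (op X)).obj Y :=
  let P : ProjectiveResolution X := (HasProjectiveResolution.out (Z := X)).some
  (F.mapProjectiveResolution P).isoExt n (F.obj Y) ≪≫
    (HomologicalComplex.homologyFunctor _ _ n).mapIso
      (hF.linearYonedaObjMapProjectiveResolutionIso P Y) ≪≫
    (P.isoExt n Y).symm

end Ext

end CategoryTheory

namespace ModuleCat

variable {R S : Type*} [Ring R] [Ring S]

noncomputable def submoduleOrderIsoOfEquivalence (e : ModuleCat.{v} R ≌ ModuleCat.{v} S)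
    (M : ModuleCat.{v} R) : Submodule R M ≃o Submodule S (e.functor.obj M) :=
  (subobjectModule M).symm.trans <|
    (Subobject.lowerEquivalence (MonoOver.congr M e)).toOrderIso.trans (subobjectModule _)

theorem isNoetherian_functor_obj_iff (e : ModuleCat.{v} R ≌ ModuleCat.{v} S)
    (M : ModuleCat.{v} R) : IsNoetherian S (e.functor.obj M) ↔ IsNoetherian R M := by
  simp only [isNoetherian_iff']
  exact ⟨fun _ => (submoduleOrderIsoOfEquivalence e M).toOrderEmbedding.wellFoundedGT,
    fun _ => (submoduleOrderIsoOfEquivalence e M).symm.toOrderEmbedding.wellFoundedGT⟩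

theorem finite_inverse_obj [IsNoetherianRing S] (e : ModuleCat.{v} R ≌ ModuleCat.{v} S)
    (N : ModuleCat.{v} S) [Module.Finite S N] : Module.Finite R (e.inverse.obj N) := by
  have : IsNoetherian S (e.functor.obj (e.inverse.obj N)) :=
    isNoetherian_of_linearEquiv (M := N) (e.counitIso.app N).symm.toLinearEquiv
  have := (isNoetherian_functor_obj_iff e _).mp this
  infer_instance

end ModuleCat

theorem subsingleton_extGroup_functor_obj_iff {A B : Type u} [Ring A] [Ring B]
    (e : ModuleCat.{u} A ≌ ModuleCat.{u} B) (M N : ModuleCat.{u} A) (i : ℕ) :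
    Subsingleton (ExtGroup (e.functor.obj M) (e.functor.obj N) i) ↔
      Subsingleton (ExtGroup M N i) :=
  have := Functor.additive_of_preserves_binary_products e.functor
  ((e.fullyFaithfulFunctor.extIso i M N).toLinearEquiv.toEquiv).subsingleton_congr

theorem stmt6_general (A B : Type u) [Ring A] [Ring B]
    [IsNoetherianRing B]
    (morita : Nonempty (ModuleCat.{u} A ≌ ModuleCat.{u} B))
    (hA : SatisfiesAC A) : SatisfiesAC B := by
  obtain ⟨e⟩ := morita
  have hExt (M N : ModuleCat.{u} B) (i : ℕ) :
      Subsingleton (ExtGroup (e.inverse.obj M) (e.inverse.obj N) i) ↔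
        Subsingleton (ExtGroup M N i) :=
    subsingleton_extGroup_functor_obj_iff e.symm M N i
  intro M hM
  obtain ⟨b, hb⟩ := hA (e.inverse.obj M) (ModuleCat.finite_inverse_obj e M)
  refine ⟨b, fun N hN ⟨n, hn⟩ i hi => (hExt M N i).mp ?_⟩
  exact hb (e.inverse.obj N) (ModuleCat.finite_inverse_obj e N)
    ⟨n, fun j hj => (hExt M N j).mpr (hn j hj)⟩ i hi

/-- Auslander's condition (AC) transfers along Morita equivalence. -/
theorem stmt6 (A B : Type u) [Ring A] [Ring B]
    [IsNoetherianRing A] [IsNoetherianRing B]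
    (morita : Nonempty (ModuleCat.{u} A ≌ ModuleCat.{u} B))
    (hA : SatisfiesAC A) : SatisfiesAC B :=
  stmt6_general A B morita hA
end

section
/- Let A be a left-noetherian ring satisfying Auslander's condition (AC) and let n be a positive integer. Then the ring of n × n matrices over A satisfies (AC). -/
/-!
The functor `M ↦ E₀₀ • M` is an equivalence `Mod Mₙ(A) ≌ Mod A` (Morita). It preserves finite
generation, because `Mₙ(A)` is finite over `A` and `E₀₀ • M` is the image of an `A`-linear
endomorphism of `M`. A fully faithful exact functor that preserves projectives maps a projective
resolution of `X` to one of `F X` and identifies the two Hom complexes into `Y` and `F Y`, so it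
induces isomorphisms `Extⁱ(X, Y) ≅ Extⁱ(F X, F Y)`. Hence the Auslander bound of `E₀₀ • M` over `A`
is one for `M` over `Mₙ(A)`.
-/

open CategoryTheory

universe u

namespace CategoryTheory.Functor.FullyFaithful

variable (R : Type*) [Ring R] {C D : Type*} [Category C] [Category D] [Abelian C] [Abelian D]
  [CategoryTheory.Linear R C] [CategoryTheory.Linear R D]
  {F : C ⥤ D} (hF : F.FullyFaithful) [F.Additive] [F.Linear R]

noncomputable def linearYonedaObjMapIso {α : Type*} [AddRightCancelSemigroup α] [One α]
    (X : ChainComplex C α) (Y : C) :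
    X.linearYonedaObj R Y ≅
      ChainComplex.linearYonedaObj ((F.mapHomologicalComplex _).obj X) R (F.obj Y) :=
  HomologicalComplex.Hom.isoOfComponents
    (fun _ ↦ (LinearEquiv.ofBijective (F.mapLinearMap R) (hF.map_bijective _ _)).toModuleIso)
    fun _ _ _ ↦ ModuleCat.hom_ext (LinearMap.ext fun _ ↦ (F.map_comp _ _).symm)

variable [EnoughProjectives C] [EnoughProjectives D] [F.PreservesProjectiveObjects]
  [F.PreservesHomology]

noncomputable def extIso_s8 (X Y : C) (i : ℕ) :
    ((Ext R C i).obj (Opposite.op X)).obj Y ≅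
      ((Ext R D i).obj (Opposite.op (F.obj X))).obj (F.obj Y) :=
  let P := projectiveResolution X
  P.isoExt i Y ≪≫
    (HomologicalComplex.homologyFunctor _ _ i).mapIso (hF.linearYonedaObjMapIso R P.complex Y) ≪≫
    ((F.mapProjectiveResolution P).isoExt i (F.obj Y)).symm

end CategoryTheory.Functor.FullyFaithful

theorem SatisfiesAC.of_equivalence {A B : Type u} [Ring A] [Ring B]
    (e : ModuleCat.{u} A ≌ ModuleCat.{u} B)
    (hfin : ∀ M : ModuleCat.{u} B, Module.Finite B M → Module.Finite A (e.inverse.obj M))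
    (hA : SatisfiesAC A) : SatisfiesAC B := by
  have := e.inverse.additive_of_preserves_binary_products
  have subsingleton_ext_iff (M N : ModuleCat.{u} B) (i : ℕ) :
      Subsingleton (ExtGroup M N i) ↔
        Subsingleton (ExtGroup (e.inverse.obj M) (e.inverse.obj N) i) :=
    (e.fullyFaithfulInverse.extIso_s8 ℤ M N i).toLinearEquiv.toEquiv.subsingleton_congr
  intro M hM
  obtain ⟨b, hb⟩ := hA _ (hfin M hM)
  refine ⟨b, fun N hN ⟨k, hk⟩ i hi ↦ (subsingleton_ext_iff M N i).2 ?_⟩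
  exact hb _ (hfin N hN) ⟨k, fun j hj ↦ (subsingleton_ext_iff M N j).1 (hk j hj)⟩ i hi

namespace MatrixModCat

variable {R : Type*} [Ring R] {ι : Type*} [Fintype ι] [DecidableEq ι]

instance finite_toModuleCatObj {M : Type*} [AddCommGroup M] [Module (Matrix ι ι R) M]
    [Module R M] [IsScalarTower R (Matrix ι ι R) M] [Module.Finite (Matrix ι ι R) M] (i : ι) :
    Module.Finite R (toModuleCatObj R M i) :=
  have := Module.Finite.trans (R := R) (Matrix ι ι R) M
  Module.Finite.range _

theorem finite_toModuleCat_obj (M : ModuleCat (Matrix ι ι R)) [Module.Finite (Matrix ι ι R) M]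
    (i : ι) : Module.Finite R ((toModuleCat R i).obj M) :=
  letI := Module.compHom M (Matrix.scalar (α := R) ι)
  haveI := isScalarTower_toModuleCat R M
  finite_toModuleCatObj i

end MatrixModCat

theorem stmt8_general (A : Type u) [Ring A] (hA : SatisfiesAC A)
    (n : ℕ) (hn : 0 < n) : SatisfiesAC (Matrix (Fin n) (Fin n) A) :=
  hA.of_equivalence (ModuleCat.matrixEquivalence A ⟨0, hn⟩)
    fun M _ ↦ MatrixModCat.finite_toModuleCat_obj M _

/-- If a left-noetherian ring `A` satisfies (AC), then so does every matrix ring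
over `A`. -/
theorem stmt8 (A : Type u) [Ring A] [IsNoetherianRing A] (hA : SatisfiesAC A)
    (n : ℕ) (hn : 0 < n) : SatisfiesAC (Matrix (Fin n) (Fin n) A) :=
  stmt8_general A hA n hn
end
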